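/- Every indecomposable thin persistence module M:(ℝ,≤)²→vect_F is isomorphic to a polytope module, i.e., to the interval module F𝕀 for some interval 𝕀 of (ℝ,≤)². -/

import Mathlib

/-- A persistence module over a preorder `P` with coefficients in a field `F`:
a functor `(P,≤) → Vect_F`, given by vector spaces `V p` and linear maps
`map : i ≤ j → (V i →ₗ[F] V j)` satisfying the functoriality equations. -/
structure PersistenceModule (F : Type) [Field F] (P : Type) [Preorder P] where
  V : P → Type
  [addCommGroup : ∀ p, AddCommGroup (V p)]
  [module : ∀ p, Module F (V p)]
  map : ∀ {i j : P}, i ≤ j → (V i →ₗ[F] V j)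
  map_id : ∀ i : P, map (le_refl i) = LinearMap.id
  map_comp : ∀ {i j k : P} (hij : i ≤ j) (hjk : j ≤ k),
    (map hjk).comp (map hij) = map (hij.trans hjk)

attribute [instance] PersistenceModule.addCommGroup PersistenceModule.module

/-- A zigzag path `a - x₁ - ⋯ - xₙ - b` in a preorder, where each consecutive
pair of points is comparable. -/
inductive Zigzag (P : Type) [Preorder P] : P → P → Type
  | single (a : P) : Zigzag P a a
  | consLe {a b c : P} (h : a ≤ b) (p : Zigzag P b c) : Zigzag P a c
  | consGe {a b c : P} (h : b ≤ a) (p : Zigzag P b c) : Zigzag P a c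

/-- Convexity of a subset of a poset: `i ≤ j ≤ k` with `i, k ∈ J` implies `j ∈ J`. -/
def PosetConvex {P : Type} [Preorder P] (J : Set P) : Prop :=
  ∀ i ∈ J, ∀ k ∈ J, ∀ j : P, i ≤ j → j ≤ k → j ∈ J

/-- Connectedness: any two points of `J` are joined by a finite zigzag path inside `J`. -/
def ZigzagConnected {P : Type} [Preorder P] (J : Set P) : Prop :=
  ∀ a b : J, Nonempty (Zigzag (↥J) a b)

open Classical in
/-- The interval (polytope) module `F𝕀` on a convex subset `I`: the vector space `F`
at points of `I` (realized as the submodule `⊤ ≤ F`) and `0` (the submodule `⊥`)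
elsewhere, with identity maps for comparable pairs inside `I` and zero maps
otherwise. -/
noncomputable def intervalModule (F : Type) [Field F] {P : Type} [Preorder P]
    (I : Set P) (hconv : PosetConvex I) : PersistenceModule F P where
  V p := ↥(if p ∈ I then (⊤ : Submodule F F) else ⊥)
  addCommGroup _ := inferInstance
  module _ := inferInstance
  map {i j} _ :=
    if hij : i ∈ I ∧ j ∈ I then
      Submodule.inclusion (by simp [hij.1, hij.2])
    else 0
  map_id := by
    intro i
    try dsimp only
    by_cases hi : i ∈ I
    · rw [dif_pos (show i ∈ I ∧ i ∈ I from ⟨hi, hi⟩)]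
      ext x
      rfl
    · rw [dif_neg (show ¬(i ∈ I ∧ i ∈ I) from fun h => hi h.1)]
      have : Subsingleton ↥(if i ∈ I then (⊤ : Submodule F F) else ⊥) := by
        rw [if_neg hi]; infer_instance
      exact Subsingleton.elim _ _
  map_comp := by
    intro i j k hij hjk
    try dsimp only
    by_cases hi : i ∈ I
    · by_cases hk : k ∈ I
      · have hj : j ∈ I := hconv i hi k hk j hij hjk
        rw [dif_pos (show i ∈ I ∧ j ∈ I from ⟨hi, hj⟩),
          dif_pos (show j ∈ I ∧ k ∈ I from ⟨hj, hk⟩),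
          dif_pos (show i ∈ I ∧ k ∈ I from ⟨hi, hk⟩)]
        ext x
        rfl
      · rw [dif_neg (show ¬(j ∈ I ∧ k ∈ I) from fun h => hk h.2),
          dif_neg (show ¬(i ∈ I ∧ k ∈ I) from fun h => hk h.2)]
        have : Subsingleton ↥(if k ∈ I then (⊤ : Submodule F F) else ⊥) := by
          rw [if_neg hk]; infer_instance
        exact Subsingleton.elim _ _
    · rw [dif_neg (show ¬(i ∈ I ∧ j ∈ I) from fun h => hi h.1),
        dif_neg (show ¬(i ∈ I ∧ k ∈ I) from fun h => hi h.1)]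
      ext x
      simp

/-- A subrepresentation of a persistence module: a family of submodules closed
under the structure maps. -/
structure Subrep {F : Type} [Field F] {P : Type} [Preorder P] (M : PersistenceModule F P) where
  S : ∀ p, Submodule F (M.V p)
  stable : ∀ {i j : P} (h : i ≤ j), Submodule.map (M.map h) (S i) ≤ S j

/-- A persistence module is decomposable if it is the (internal) direct sum of two
nonzero subrepresentations. -/
def PersistenceModule.Decomposable {F : Type} [Field F] {P : Type} [Preorder P]
    (M : PersistenceModule F P) : Prop :=
  ∃ A B : Subrep M, (∃ p, A.S p ≠ ⊥) ∧ (∃ p, B.S p ≠ ⊥) ∧ ∀ p, IsCompl (A.S p) (B.S p)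

/-- Isomorphism of persistence modules: a family of linear equivalences commuting
with the structure maps. -/
def IsIsomorphic {F : Type} [Field F] {P : Type} [Preorder P]
    (M N : PersistenceModule F P) : Prop :=
  ∃ f : ∀ p, M.V p ≃ₗ[F] N.V p, ∀ (i j : P) (h : i ≤ j),
    (N.map h).comp (f i).toLinearMap = (f j).toLinearMap.comp (M.map h)


/-!
Call `v ∈ M a` and `w ∈ M b` linked when a zigzag of structure maps through nonzero vectors
carries `v` to `w`. The support points carrying a vector linked to a fixed `e₀ ≠ 0` split off a
direct summand, so for indecomposable `M` every support point carries a vector linked to `e₀`.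
These vectors are coherent because in the plane a linked pair `v ∈ M x`, `w ∈ M y` with `x ≤ y`
always satisfies `M(x ≤ y) v = w`. To see it, shorten the zigzag: valleys can be raised to the
meet of their neighbours, and, since a nonzero map out of a space of dimension at most one is
injective, peaks can be lowered to the join of their neighbours. If the peak after the first
valley is not above `x`, that valley can be raised onto a horizontal or vertical line strictly
below or left of `x`; points on such a line are comparable, and the zigzag, which has to leave the line to
reach `y`, can be contracted along it. Coherent nonzero vectors make the support convex and
identify `M` with its interval module.
-/

section RankOne

variable {K V W : Type*} [Field K] [AddCommGroup V] [Module K V] [AddCommGroup W] [Module K W]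

theorem exists_smul_eq_of_rank_le_one (hV : Module.rank K V ≤ 1) {x : V} (hx : x ≠ 0)
    (y : V) : ∃ c : K, c • x = y := by
  obtain ⟨v₀, hv₀⟩ := rank_le_one_iff.mp hV
  obtain ⟨a, rfl⟩ := hv₀ x
  obtain ⟨b, rfl⟩ := hv₀ y
  have ha : a ≠ 0 := by rintro rfl; simp at hx
  exact ⟨b / a, by rw [smul_smul, div_mul_cancel₀ b ha]⟩

theorem LinearMap.injective_of_rank_le_one (hV : Module.rank K V ≤ 1) (f : V →ₗ[K] W) {x : V}
    (hfx : f x ≠ 0) : Function.Injective f := by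
  rw [← LinearMap.ker_eq_bot, Submodule.eq_bot_iff]
  intro y hy
  obtain ⟨c, rfl⟩ := exists_smul_eq_of_rank_le_one hV (ne_zero_of_map hfx) y
  rw [LinearMap.mem_ker, map_smul, smul_eq_zero] at hy
  simp [hy.resolve_right hfx]

end RankOne

theorem Prod.exists_coord_lt_of_not_le {α : Type} [LinearOrder α] {x q : α × α}
    (h : ¬ x ≤ q) : ∃ π : LatticeHom (α × α) α,
      (∀ a b, π a = π b → a ≤ b ∨ b ≤ a) ∧ π q < π x := by
  rw [Prod.le_def, not_and_or, not_le, not_le] at h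
  rcases h with h | h
  · refine ⟨LatticeHom.fst, fun a b hab => ?_, h⟩
    rcases le_total a.2 b.2 with h2 | h2
    · exact .inl (Prod.le_def.mpr ⟨hab.le, h2⟩)
    · exact .inr (Prod.le_def.mpr ⟨hab.ge, h2⟩)
  · refine ⟨LatticeHom.snd, fun a b hab => ?_, h⟩
    rcases le_total a.1 b.1 with h1 | h1
    · exact .inl (Prod.le_def.mpr ⟨h1, hab.le⟩)
    · exact .inr (Prod.le_def.mpr ⟨h1, hab.ge⟩)

theorem IsIsomorphic.symm {F : Type} [Field F] {P : Type} [Preorder P]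
    {M N : PersistenceModule F P} (h : IsIsomorphic M N) : IsIsomorphic N M := by
  obtain ⟨f, hf⟩ := h
  refine ⟨fun p => (f p).symm, fun i j hij => LinearMap.ext fun v => ?_⟩
  rw [LinearMap.comp_apply, LinearMap.comp_apply, LinearEquiv.coe_coe, LinearEquiv.coe_coe,
    LinearEquiv.eq_symm_apply, ← LinearEquiv.coe_coe, ← LinearMap.comp_apply, ← hf,
    LinearMap.comp_apply, LinearEquiv.coe_coe, LinearEquiv.apply_symm_apply]

section IntervalModule

variable {F : Type} [Field F] {P : Type} [Preorder P] {I : Set P} {hconv : PosetConvex I}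

theorem intervalModule_coe_eq_zero {p : P} (hp : p ∉ I) (z : (intervalModule F I hconv).V p) :
    z.1 = 0 := by
  classical
  have hbot : ∀ x : F, x ∈ (if p ∈ I then ⊤ else ⊥ : Submodule F F) → x = 0 := by
    intro x hx
    rw [if_neg hp] at hx
    exact (Submodule.mem_bot F).mp hx
  exact hbot z.1 z.2

theorem intervalModule_coe_map {i j : P} (h : i ≤ j) (hj : j ∈ I)
    (z : (intervalModule F I hconv).V i) : ((intervalModule F I hconv).map h z).1 = z.1 := by
  classical
  by_cases hi : i ∈ I
  · simp only [intervalModule]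
    rw [dif_pos (And.intro hi hj)]
    rfl
  · simp only [intervalModule]
    rw [dif_neg (fun hij : i ∈ I ∧ j ∈ I => hi hij.1)]
    exact (intervalModule_coe_eq_zero hi z).symm

end IntervalModule

namespace PersistenceModule

section Preorder

variable {F : Type} [Field F] {P : Type} [Preorder P] (M : PersistenceModule F P)

def support : Set P := {p | ∃ v : M.V p, v ≠ 0}

structure IsCoherentGenerators (I : Set P) (e : ∀ p, M.V p) : Prop where
  ne_zero : ∀ p ∈ I, e p ≠ 0
  map_eq : ∀ ⦃i j : P⦄ (h : i ≤ j), i ∈ I → j ∈ I → M.map h (e i) = e j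

inductive Linked : ℕ → (a : P) → M.V a → (b : P) → M.V b → Prop
  | refl (a : P) (v : M.V a) : Linked 0 a v a v
  | up {n : ℕ} {a b c : P} {v : M.V a} {w : M.V b} {u : M.V c} (h : a ≤ b)
      (hvw : M.map h v = w) (hw : w ≠ 0) : Linked n b w c u → Linked (n + 1) a v c u
  | down {n : ℕ} {a b c : P} {v : M.V a} {w : M.V b} {u : M.V c} (h : b ≤ a)
      (hwv : M.map h w = v) (hv : v ≠ 0) : Linked n b w c u → Linked (n + 1) a v c u

variable {M}

theorem map_self {i : P} (h : i ≤ i) (v : M.V i) : M.map h v = v := by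
  rw [M.map_id i]; rfl

theorem map_map {i j k : P} (hij : i ≤ j) (hjk : j ≤ k) (v : M.V i) :
    M.map hjk (M.map hij v) = M.map (hij.trans hjk) v := by
  rw [← M.map_comp hij hjk]; rfl

theorem eq_zero_of_notMem_support {p : P} (hp : p ∉ M.support) (v : M.V p) : v = 0 := by
  by_contra hv
  exact hp ⟨v, hv⟩

theorem eq_of_map_eq (hthin : ∀ p, Module.rank F (M.V p) ≤ 1) {i j : P} (h : i ≤ j)
    {u v : M.V i} (huv : M.map h u = M.map h v) (hv : M.map h v ≠ 0) : u = v :=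
  LinearMap.injective_of_rank_le_one (hthin i) _ hv huv

namespace Linked

theorem ne_zero {n : ℕ} {a b : P} {v : M.V a} {w : M.V b} (hl : M.Linked n a v b w)
    (hv : v ≠ 0) : w ≠ 0 := by
  induction hl with
  | refl => exact hv
  | up _ _ hw _ ih => exact ih hw
  | down h hwv _ _ ih => exact ih (ne_zero_of_map (hwv ▸ hv))

theorem trans {n m : ℕ} {a b c : P} {v : M.V a} {w : M.V b} {u : M.V c}
    (hab : M.Linked n a v b w) (hbc : M.Linked m b w c u) : M.Linked (m + n) a v c u := by
  induction hab with
  | refl => exact hbc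
  | up h hvw hw _ ih => exact up h hvw hw (ih hbc)
  | down h hwv hv _ ih => exact down h hwv hv (ih hbc)

theorem symm {n : ℕ} {a b : P} {v : M.V a} {w : M.V b} (hl : M.Linked n a v b w) :
    M.Linked n b w a v := by
  induction hl with
  | refl => exact refl _ _
  | up h hvw hw _ ih => simpa [Nat.add_comm] using ih.trans (down h hvw hw (refl _ _))
  | down h hwv hv _ ih => simpa [Nat.add_comm] using ih.trans (up h hwv hv (refl _ _))

theorem zigzag {n : ℕ} {a b : P} {v : M.V a} {w : M.V b} (hl : M.Linked n a v b w)
    (hv : v ≠ 0) : Nonempty (Zigzag M.support ⟨a, v, hv⟩ ⟨b, w, hl.ne_zero hv⟩) := by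
  induction hl with
  | refl => exact ⟨.single _⟩
  | up h _ hw _ ih =>
    exact (ih hw).map (.consLe (show (⟨_, _, hv⟩ : M.support) ≤ ⟨_, _, hw⟩ from h))
  | down h hwv _ _ ih =>
    have hw := ne_zero_of_map (hwv ▸ hv)
    exact (ih hw).map (.consGe (show (⟨_, _, hw⟩ : M.support) ≤ ⟨_, _, hv⟩ from h))

end Linked

open Classical in
noncomputable def subrepOfSet (C : Set P)
    (hC : ∀ ⦃i j : P⦄ (h : i ≤ j), i ∈ C → j ∉ C → M.map h = 0) : Subrep M where
  S p := if p ∈ C then ⊤ else ⊥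
  stable {i j} h := by
    by_cases hi : i ∈ C
    · by_cases hj : j ∈ C
      · simp [hj]
      · simp [hi, hj, hC h hi hj]
    · simp [hi]

theorem decomposable_of_separating (C : Set P)
    (hout : ∀ ⦃i j : P⦄ (h : i ≤ j), i ∈ C → j ∉ C → M.map h = 0)
    (hin : ∀ ⦃i j : P⦄ (h : i ≤ j), i ∉ C → j ∈ C → M.map h = 0)
    {p q : P} (hp : p ∈ C ∩ M.support) (hq : q ∈ M.support \ C) : M.Decomposable := by
  classical
  have hout' : ∀ ⦃i j : P⦄ (h : i ≤ j), i ∈ Cᶜ → j ∉ Cᶜ → M.map h = 0 :=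
    fun i j h hi hj => hin h hi (not_not.mp hj)
  have top_ne_bot : ∀ {r : P}, r ∈ M.support → (⊤ : Submodule F (M.V r)) ≠ ⊥ := by
    rintro r ⟨v, hv⟩ h
    exact hv ((Submodule.eq_bot_iff _).mp h v Submodule.mem_top)
  refine ⟨subrepOfSet C hout, subrepOfSet Cᶜ hout', ⟨p, ?_⟩, ⟨q, ?_⟩, fun r => ?_⟩
  · simpa [subrepOfSet, hp.1] using top_ne_bot hp.2
  · simpa [subrepOfSet, hq.2] using top_ne_bot hq.1
  · by_cases hr : r ∈ C
    · simpa [subrepOfSet, hr] using isCompl_top_bot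
    · simpa [subrepOfSet, hr] using isCompl_bot_top

theorem exists_linked_of_not_decomposable (hthin : ∀ p, Module.rank F (M.V p) ≤ 1)
    (hind : ¬ M.Decomposable) {a b : P} {v : M.V a} (hv : v ≠ 0) (hb : b ∈ M.support) :
    ∃ n w, M.Linked n a v b w := by
  by_contra hab
  refine hind (decomposable_of_separating {p | ∃ n w, M.Linked n a v p w} ?_ ?_
    ⟨⟨0, v, .refl a v⟩, v, hv⟩ ⟨hb, hab⟩)
  · rintro i j h ⟨n, w, hw⟩ hj
    ext u
    by_contra hu
    obtain ⟨c, rfl⟩ := exists_smul_eq_of_rank_le_one (hthin i) (hw.ne_zero hv) u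
    rw [map_smul] at hu
    exact hj ⟨_, _, hw.trans (.up h rfl (right_ne_zero_of_smul hu) (.refl _ _))⟩
  · rintro i j h hi ⟨n, w, hw⟩
    ext u
    by_contra hu
    obtain ⟨c, hc⟩ := exists_smul_eq_of_rank_le_one (hthin j) hu w
    rw [← map_smul] at hc
    exact hi ⟨_, _, hw.trans (.down h hc (hw.ne_zero hv) (.refl _ _))⟩

theorem support_zigzagConnected (hthin : ∀ p, Module.rank F (M.V p) ≤ 1)
    (hind : ¬ M.Decomposable) : ZigzagConnected M.support := by
  rintro ⟨a, va, hva⟩ ⟨b, hb⟩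
  obtain ⟨n, w, hl⟩ := exists_linked_of_not_decomposable hthin hind hva hb
  exact hl.zigzag hva

theorem IsCoherentGenerators.posetConvex_support {e : ∀ p, M.V p}
    (he : M.IsCoherentGenerators M.support e) : PosetConvex M.support := by
  intro i hi k hk j hij hjk
  refine ⟨M.map hij (e i), fun h0 => he.ne_zero k hk ?_⟩
  rw [← he.map_eq (hij.trans hjk) hi hk, ← map_map hij hjk, h0, map_zero]

theorem IsCoherentGenerators.isIsomorphic_intervalModule
    (hthin : ∀ p, Module.rank F (M.V p) ≤ 1) {e : ∀ p, M.V p}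
    (he : M.IsCoherentGenerators M.support e) (hconv : PosetConvex M.support) :
    IsIsomorphic M (intervalModule F M.support hconv) := by
  classical
  let φ p : (intervalModule F M.support hconv).V p →ₗ[F] M.V p :=
    (LinearMap.toSpanSingleton F _ (e p)).comp (Submodule.subtype _)
  have hφ : ∀ p, Function.Bijective (φ p) := by
    intro p
    by_cases hp : p ∈ M.support
    · refine ⟨fun z z' hzz' => Subtype.ext (smul_left_injective F (he.ne_zero p hp) hzz'),
        fun v => ?_⟩
      obtain ⟨c, rfl⟩ := exists_smul_eq_of_rank_le_one (hthin p) (he.ne_zero p hp) v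
      exact ⟨⟨c, by simp [hp]⟩, rfl⟩
    · refine ⟨fun z z' _ => Subtype.ext ?_, fun v =>
        ⟨0, (eq_zero_of_notMem_support hp _).trans (eq_zero_of_notMem_support hp v).symm⟩⟩
      rw [intervalModule_coe_eq_zero hp, intervalModule_coe_eq_zero hp]
  refine IsIsomorphic.symm ⟨fun p => .ofBijective (φ p) (hφ p), fun i j h => ?_⟩
  ext z
  change M.map h (z.1 • e i) = ((intervalModule F M.support hconv).map h z).1 • e j
  by_cases hj : j ∈ M.support
  · rw [intervalModule_coe_map h hj]
    by_cases hi : i ∈ M.support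
    · rw [map_smul, he.map_eq h hi hj]
    · simp [intervalModule_coe_eq_zero hi]
  · exact (eq_zero_of_notMem_support hj _).trans (eq_zero_of_notMem_support hj _).symm

end Preorder

section Lattice

variable {F : Type} [Field F] {P : Type} [Lattice P] {M : PersistenceModule F P}

/-- The first valley of the zigzag can be raised to the meet of its two neighbours. That meet lies
either in a lower fibre of `π`, where we recurse, or in the fibre of `w`, which is a chain, so the
zigzag contracts. -/
theorem Linked.exists_shorter_of_fibre_step {α : Type} [LinearOrder α]
    (hthin : ∀ p, Module.rank F (M.V p) ≤ 1) (π : LatticeHom P α)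
    (hπ : ∀ a b, π a = π b → a ≤ b ∨ b ≤ a) {y : P} {t : M.V y} (n : ℕ) :
    ∀ {w q : P} {vw : M.V w} {vq : M.V q} (hwq : w ≤ q), M.map hwq vw = vq → vq ≠ 0 →
      π w = π q → π q < π y → M.Linked n q vq y t → ∃ m ≤ n, M.Linked m w vw y t := by
  induction n using Nat.strong_induction_on with
  | _ n ih =>
  intro w q vw vq hwq hvq hvq0 hπwq hπqy hl
  cases hl with
  | refl => exact absurd hπqy (lt_irrefl _)
  | up hqr hvr hr0 hl =>
    exact ⟨_, le_rfl, .up (hwq.trans hqr) (by rw [← map_map hwq hqr, hvq, hvr]) hr0 hl⟩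
  | @down n₁ _ u _ _ vu _ huq hvu _ hl =>
    cases hl with
    | refl => exact absurd (OrderHomClass.mono π huq) (not_le.mpr hπqy)
    | down hsu hvs _ hl =>
      exact ⟨_, le_rfl,
        .up hwq hvq hvq0 (.down (hsu.trans huq) (by rw [← map_map hsu huq, hvs, hvu]) hvq0 hl)⟩
    | @up n₂ _ q' _ _ vq' _ huq' hvq' hvq'0 hl =>
      have hu' : u ≤ q ⊓ q' := le_inf huq huq'
      have hvu'q : M.map inf_le_left (M.map hu' vu) = vq := by rw [map_map, hvu]
      have hvu'q' : M.map inf_le_right (M.map hu' vu) = vq' := by rw [map_map, hvq']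
      rcases lt_or_ge (π q') (π q) with hlt | hle
      · obtain ⟨m, hm, hl'⟩ := ih n₂ (by omega) inf_le_right hvu'q' hvq'0
          (by rw [map_inf, min_eq_right hlt.le]) (hlt.trans hπqy) hl
        exact ⟨m + 2, by omega, .up hwq hvq hvq0 (.down inf_le_left hvu'q hvq0 hl')⟩
      · have hπ' : π w = π (q ⊓ q') := by rw [map_inf, min_eq_left hle, hπwq]
        rcases hπ w (q ⊓ q') hπ' with hwu' | hu'w
        · have hvw : M.map hwu' vw = M.map hu' vu :=
            eq_of_map_eq hthin inf_le_left (by rw [map_map, hvq, hvu'q]) (by rwa [hvu'q])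
          exact ⟨n₂ + 1, by omega,
            .up (hwu'.trans inf_le_right) (by rw [← map_map hwu' inf_le_right, hvw, hvu'q'])
              hvq'0 hl⟩
        · have hvw : M.map hu'w (M.map hu' vu) = vw :=
            eq_of_map_eq hthin hwq (by rw [map_map, hvq, hvu'q]) (by rwa [hvq])
          exact ⟨n₂ + 2, by omega,
            .down hu'w hvw (ne_zero_of_map (hvq ▸ hvq0)) (.up inf_le_right hvu'q' hvq'0 hl)⟩

end Lattice

section Plane

variable {F : Type} [Field F] {α : Type} [LinearOrder α] {M : PersistenceModule F (α × α)}

theorem Linked.map_eq (hthin : ∀ p, Module.rank F (M.V p) ≤ 1) (n : ℕ) :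
    ∀ {x y : α × α} {v : M.V x} {w : M.V y}, M.Linked n x v y w →
      ∀ hxy : x ≤ y, M.map hxy v = w := by
  induction n using Nat.strong_induction_on with
  | _ n ih =>
  intro x y v w hl hxy
  cases hl with
  | refl => exact map_self _ _
  | down hbx hvb _ hl =>
    rw [← hvb, map_map]
    exact ih _ (by omega) hl _
  | @up n₁ _ q _ _ vq _ hxq hvq hvq0 hl =>
    cases hl with
    | refl => exact hvq
    | up hqr hvr hr0 hl =>
      exact ih _ (by omega)
        (.up (hxq.trans hqr) (by rw [← map_map hxq hqr, hvq, hvr]) hr0 hl) hxy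
    | @down n₂ _ b _ _ vb _ hbq hvb _ hl =>
      cases hl with
      | refl => exact eq_of_map_eq hthin hbq (by rw [map_map, hvq, hvb]) (by rwa [hvb])
      | down hsb hvs _ hl =>
        exact ih _ (by omega) (.up hxq hvq hvq0
          (.down (hsb.trans hbq) (by rw [← map_map hsb hbq, hvs, hvb]) hvq0 hl)) hxy
      | @up n₃ _ q₂ _ _ vq₂ _ hbq₂ hvq₂ hvq₂0 hl =>
        by_cases hxq₂ : x ≤ q₂
        · have hvx : M.map le_sup_left v = M.map le_sup_right vb :=
            eq_of_map_eq hthin (sup_le hxq hbq) (by rw [map_map, map_map, hvq, hvb])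
              (by rwa [map_map, hvb])
          exact ih _ (by omega) (.up hxq₂ (by
            rw [← map_map le_sup_left (sup_le hxq₂ hbq₂), hvx, map_map, hvq₂]) hvq₂0 hl) hxy
        · obtain ⟨π, hπ, hlt⟩ := Prod.exists_coord_lt_of_not_le hxq₂
          have hbb' : b ≤ b ⊔ (x ⊓ q₂) := le_sup_left
          have hb'q : b ⊔ (x ⊓ q₂) ≤ q := sup_le hbq (inf_le_left.trans hxq)
          have hb'q₂ : b ⊔ (x ⊓ q₂) ≤ q₂ := sup_le hbq₂ inf_le_right
          have hπb' : π (b ⊔ (x ⊓ q₂)) = π q₂ := by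
            rw [map_sup, map_inf, min_eq_right hlt.le,
              max_eq_right (OrderHomClass.mono π hbq₂)]
          obtain ⟨m, hm, hl'⟩ := Linked.exists_shorter_of_fibre_step hthin π hπ n₃ hb'q₂
            (vw := M.map hbb' vb) (by rw [map_map, hvq₂]) hvq₂0 hπb'
            (hlt.trans_le (OrderHomClass.mono π hxy)) hl
          exact ih (m + 2) (by omega)
            (.up hxq hvq hvq0 (.down hb'q (by rw [map_map, hvb]) hvq0 hl')) hxy

theorem exists_isCoherentGenerators_support (hthin : ∀ p, Module.rank F (M.V p) ≤ 1)
    (hind : ¬ M.Decomposable) : ∃ e : ∀ p, M.V p, M.IsCoherentGenerators M.support e := by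
  rcases M.support.eq_empty_or_nonempty with hS | ⟨p₀, e₀, he₀⟩
  · exact ⟨0, by simp [hS], by simp [hS]⟩
  choose! n e he using fun p (hp : p ∈ M.support) =>
    exists_linked_of_not_decomposable hthin hind he₀ hp
  exact ⟨e, fun p hp => (he p hp).ne_zero he₀,
    fun i j h hi hj => ((he i hi).symm.trans (he j hj)).map_eq hthin _ h⟩

end Plane

end PersistenceModule

open PersistenceModule

/-- Every indecomposable thin persistence module on `(ℝ,≤)²` is
isomorphic to a polytope module, i.e. to the interval module `F𝕀` on some interval
(connected convex subset) `𝕀` of `(ℝ,≤)²`. -/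
theorem statement14 (F : Type) [Field F] (M : PersistenceModule F (ℝ × ℝ))
    (hthin : ∀ i, Module.rank F (M.V i) ≤ 1)
    (hind : ¬ M.Decomposable) :
    ∃ (I : Set (ℝ × ℝ)) (hconv : PosetConvex I), ZigzagConnected I ∧
      IsIsomorphic M (intervalModule F I hconv) := by
  obtain ⟨e, he⟩ := exists_isCoherentGenerators_support hthin hind
  exact ⟨M.support, he.posetConvex_support, support_zigzagConnected hthin hind,
    he.isIsomorphic_intervalModule hthin he.posetConvex_support⟩
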